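/- arXiv:2101.11039 — 3 statements merged into one kernel-verified Lean document; each statement's English description precedes it below -/
import Mathlib

section
/- For integers n ≥ r ≥ 1, k ≥ 0, and l ≥ 1, the orthogonality relation ∑_j (-1)^j · S1(n,j) · S2(j,k) = (-1)^n · δ_{n,k} holds, where the sum is over all j with r ≤ j ≤ n; moreover the sum is 0 when n < r. -/
/-- The `(l,r)`-Stirling numbers of the first kind. -/
def S1 (l r : ℕ) : ℕ → ℕ → ℕ
  | n, k =>
    if _h1 : n < r then 0
    else if _h2 : n = r then (if k = r then 1 else 0)
    else S1 l r (n - 1) (k - 1) + (n - 1) ^ l * S1 l r (n - 1) k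
termination_by n _ => n
decreasing_by all_goals omega

/-- The `(l,r)`-Stirling numbers of the second kind. -/
def S2 (l r : ℕ) : ℕ → ℕ → ℕ
  | n, k =>
    if _h1 : n < r then 0
    else if _h2 : n = r then (if k = r then 1 else 0)
    else S2 l r (n - 1) (k - 1) + k ^ l * S2 l r (n - 1) k
termination_by n _ => n
decreasing_by all_goals omega

lemma S1_def (l r n k : ℕ) : S1 l r n k =
    if n < r then 0
    else if n = r then (if k = r then 1 else 0)
    else S1 l r (n - 1) (k - 1) + (n - 1) ^ l * S1 l r (n - 1) k := by
  rw [S1]; split_ifs <;> rfl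

lemma S2_def (l r n k : ℕ) : S2 l r n k =
    if n < r then 0
    else if n = r then (if k = r then 1 else 0)
    else S2 l r (n - 1) (k - 1) + k ^ l * S2 l r (n - 1) k := by
  rw [S2]; split_ifs <;> rfl

lemma S1_lt (l r : ℕ) : ∀ n k, k < r → S1 l r n k = 0 := by
  intro n
  induction n using Nat.strong_induction_on with
  | _ n ih =>
    intro k hk
    rw [S1_def]
    split_ifs with h1 h2 h3
    · rfl
    · omega
    · rfl
    · rw [ih (n-1) (by omega) (k-1) (by omega), ih (n-1) (by omega) k hk]; ring

lemma S1_gt (l r : ℕ) : ∀ n k, n < k → S1 l r n k = 0 := by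
  intro n
  induction n using Nat.strong_induction_on with
  | _ n ih =>
    intro k hk
    rw [S1_def]
    split_ifs with h1 h2 h3
    · rfl
    · omega
    · rfl
    · rw [ih (n-1) (by omega) (k-1) (by omega), ih (n-1) (by omega) k (by omega)]; ring

lemma key (l r : ℕ) (hr : 1 ≤ r) (hl : 1 ≤ l) : ∀ n, r ≤ n → ∀ k,
    ∑ j ∈ Finset.Icc r n, (-1 : ℤ) ^ j * (S1 l r n j : ℤ) * (S2 l r j k : ℤ) =
      (-1 : ℤ) ^ n * (if n = k then 1 else 0) := by
  intro n hn
  induction n, hn using Nat.le_induction with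
  | base =>
    intro k
    rw [Finset.Icc_self, Finset.sum_singleton, S1_def, S2_def]
    rw [if_neg (lt_irrefl r), if_pos rfl, if_neg (lt_irrefl r), if_pos rfl, if_pos rfl]
    by_cases h : k = r
    · subst h; simp
    · rw [if_neg h, if_neg (by omega)]; ring
  | succ n hn ih =>
    intro k
    -- expand S1 (n+1)
    have step1 : ∀ j ∈ Finset.Icc r (n+1),
        (-1 : ℤ) ^ j * (S1 l r (n+1) j : ℤ) * (S2 l r j k : ℤ) =
        (-1 : ℤ) ^ j * (S1 l r n (j-1) : ℤ) * (S2 l r j k : ℤ) +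
        ((n:ℤ)^l) * ((-1 : ℤ) ^ j * (S1 l r n j : ℤ) * (S2 l r j k : ℤ)) := by
      intro j _
      rw [S1_def l r (n+1) j]
      rw [if_neg (by omega), if_neg (by omega)]
      simp only [Nat.add_sub_cancel]
      push_cast
      ring
    rw [Finset.sum_congr rfl step1, Finset.sum_add_distrib, ← Finset.mul_sum]
    -- second sum: top term vanishes
    have h2 : ∑ j ∈ Finset.Icc r (n+1), (-1 : ℤ) ^ j * (S1 l r n j : ℤ) * (S2 l r j k : ℤ)
        = (-1 : ℤ) ^ n * (if n = k then 1 else 0) := by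
      rw [Finset.sum_Icc_succ_top (by omega), S1_gt l r n (n+1) (by omega)]
      simpa using ih k
    rw [h2]
    -- first sum: reindex j = i + 1
    have hmap : Finset.Icc r (n+1) = (Finset.Icc (r-1) n).map (addRightEmbedding 1) := by
      rw [Finset.map_add_right_Icc]; congr 1; omega
    rw [hmap, Finset.sum_map]
    simp only [addRightEmbedding_apply, Nat.add_sub_cancel]
    have hins : Finset.Icc (r-1) n = insert (r-1) (Finset.Icc r n) := by
      ext x; simp only [Finset.mem_Icc, Finset.mem_insert]; omega
    rw [hins, Finset.sum_insert (by simp only [Finset.mem_Icc]; omega),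
      S1_lt l r n (r-1) (by omega)]
    simp only [Nat.cast_zero, mul_zero, zero_mul, zero_add]
    -- expand S2 (i+1)
    have step2 : ∀ i ∈ Finset.Icc r n,
        (-1 : ℤ) ^ (i+1) * (S1 l r n i : ℤ) * (S2 l r (i+1) k : ℤ) =
        -((-1 : ℤ) ^ i * (S1 l r n i : ℤ) * (S2 l r i (k-1) : ℤ)) +
        (-((k:ℤ)^l)) * ((-1 : ℤ) ^ i * (S1 l r n i : ℤ) * (S2 l r i k : ℤ)) := by
      intro i hi
      rw [Finset.mem_Icc] at hi
      rw [S2_def l r (i+1) k, if_neg (by omega), if_neg (by omega)]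
      simp only [Nat.add_sub_cancel]
      push_cast
      ring
    rw [Finset.sum_congr rfl step2, Finset.sum_add_distrib, ← Finset.mul_sum,
      Finset.sum_neg_distrib, ih k, ih (k-1)]
    -- scalar identity
    have hn1 : 1 ≤ n := le_trans hr hn
    have e1 : (if n = k - 1 then (1:ℤ) else 0) = if n + 1 = k then 1 else 0 := by
      split_ifs <;> first | rfl | omega
    rw [e1]
    by_cases h3 : n + 1 = k
    · rw [if_pos h3, if_neg (by omega)]; ring
    · rw [if_neg h3]
      by_cases h2' : n = k
      · subst h2'; rw [if_pos rfl]; ring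
      · rw [if_neg h2']; ring

theorem stmt6 (l r n k : ℕ) (hr : 1 ≤ r) (hn : r ≤ n) (hl : 1 ≤ l) :
    (∑ j ∈ Finset.Icc r n, (-1 : ℤ) ^ j * (S1 l r n j : ℤ) * (S2 l r j k : ℤ) =
      (-1 : ℤ) ^ n * (if n = k then 1 else 0)) ∧
    (∀ m : ℕ, m < r →
      ∑ j ∈ Finset.Icc r m, (-1 : ℤ) ^ j * (S1 l r m j : ℤ) * (S2 l r j k : ℤ) = 0) := by
  refine ⟨key l r hr hl n hn k, fun m hm => ?_⟩
  rw [Finset.Icc_eq_empty (by omega), Finset.sum_empty]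
end

section
/- For integers n ≥ r ≥ 1, k ≥ 0, and l ≥ 1, the convolution identity ∑ S2^{(2^l)}(n+i_l, n) · ∏_{s=0}^{l-1} S1^{(2^s)}(n+1, n+1−i_s) = S2^{(1)}(n+k, n) holds, where the sum is over all tuples (i_0, i_1, …, i_l) of nonnegative integers with i_0 + 2i_1 + ⋯ + 2^l i_l = k. -/
section Recurrences

variable {m r n : ℕ}

lemma S1_of_lt (k : ℕ) (h : n < r) : S1 m r n k = 0 := by
  rw [S1, dif_pos h]

lemma S1_self (k : ℕ) : S1 m r r k = if k = r then 1 else 0 := by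
  rw [S1, dif_neg (lt_irrefl r), dif_pos rfl]

lemma S1_succ (k : ℕ) (h : r ≤ n) :
    S1 m r (n + 1) k = S1 m r n (k - 1) + n ^ m * S1 m r n k := by
  rw [S1, dif_neg (by omega), dif_neg (by omega), Nat.add_sub_cancel]

lemma S1_eq_zero_of_lt {k : ℕ} (h : n < k) : S1 m r n k = 0 := by
  induction n generalizing k with
  | zero => rw [S1]; split_ifs <;> omega
  | succ n ih =>
    rcases lt_trichotomy (n + 1) r with hlt | rfl | hgt
    · exact S1_of_lt k hlt
    · rw [S1_self, if_neg h.ne']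
    · rw [S1_succ k (by omega), ih (by omega), ih (by omega), mul_zero, add_zero]

lemma S2_of_lt (k : ℕ) (h : n < r) : S2 m r n k = 0 := by
  rw [S2, dif_pos h]

lemma S2_self (k : ℕ) : S2 m r r k = if k = r then 1 else 0 := by
  rw [S2, dif_neg (lt_irrefl r), dif_pos rfl]

lemma S2_succ (k : ℕ) (h : r ≤ n) :
    S2 m r (n + 1) k = S2 m r n (k - 1) + k ^ m * S2 m r n k := by
  rw [S2, dif_neg (by omega), dif_neg (by omega), Nat.add_sub_cancel]

lemma S2_eq_zero_of_lt {k : ℕ} (h : n < k) : S2 m r n k = 0 := by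
  induction n generalizing k with
  | zero => rw [S2]; split_ifs <;> omega
  | succ n ih =>
    rcases lt_trichotomy (n + 1) r with hlt | rfl | hgt
    · exact S2_of_lt k hlt
    · rw [S2_self, if_neg h.ne']
    · rw [S2_succ k (by omega), ih (by omega), ih (by omega), mul_zero, add_zero]

lemma S2_eq_zero_of_lt_r {k : ℕ} (h : k < r) : S2 m r n k = 0 := by
  induction n generalizing k with
  | zero => rw [S2]; split_ifs <;> omega
  | succ n ih =>
    rcases lt_trichotomy (n + 1) r with hlt | rfl | hgt
    · exact S2_of_lt k hlt
    · rw [S2_self, if_neg h.ne]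
    · rw [S2_succ k (by omega), ih (by omega), ih h, mul_zero, add_zero]

end Recurrences

open PowerSeries Finset

section GeneratingFunctions

variable (R : Type*) [CommSemiring R]

noncomputable def stirling1Series (m r n : ℕ) : R⟦X⟧ :=
  mk fun i => (S1 m r (n + 1) (n + 1 - i) : R)

noncomputable def stirling2Series (m r n : ℕ) : R⟦X⟧ :=
  mk fun k => (S2 m r (n + k) n : R)

variable {R} {m r n : ℕ}

@[simp]
lemma coeff_stirling1Series (i : ℕ) :
    coeff i (stirling1Series R m r n) = (S1 m r (n + 1) (n + 1 - i) : R) :=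
  coeff_mk _ _

@[simp]
lemma coeff_stirling2Series (k : ℕ) :
    coeff k (stirling2Series R m r n) = (S2 m r (n + k) n : R) :=
  coeff_mk _ _

lemma stirling1Series_eq_prod (hr : 1 ≤ r) (hn : r ≤ n) :
    stirling1Series R m r n = ∏ j ∈ Icc r n, (1 + C ((j : R) ^ m) * X) := by
  induction n, hn using Nat.le_induction with
  | base =>
    ext i
    rw [Icc_self, prod_singleton, coeff_stirling1Series, S1_succ _ le_rfl, S1_self, S1_self]
    simp only [map_add, coeff_one, coeff_C_mul, coeff_X]
    split_ifs <;> first | omega | simp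
  | succ n hn ih =>
    rw [prod_Icc_succ_top (by omega), ← ih, mul_add, mul_one, mul_left_comm]
    ext (_ | i) <;> simp only [map_add, coeff_C_mul, coeff_zero_mul_X, coeff_succ_mul_X,
      coeff_stirling1Series, S1_succ _ (by omega : r ≤ n + 1)]
    · simp [S1_eq_zero_of_lt (Nat.lt_succ_self (n + 1))]
    · rw [show n + 1 + 1 - (i + 1) - 1 = n + 1 - (i + 1) by omega,
        show n + 1 + 1 - (i + 1) = n + 1 - i by omega]
      push_cast
      ring

end GeneratingFunctions

section CommRing

variable {R : Type*} [CommRing R] {m r n : ℕ}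

lemma stirling2Series_self_mul_one_sub (hr : 1 ≤ r) :
    stirling2Series R m r r * (1 - C ((r : R) ^ m) * X) = 1 := by
  rw [mul_sub, mul_one, mul_left_comm]
  ext (_ | k) <;> simp only [map_sub, coeff_C_mul, coeff_zero_mul_X, coeff_succ_mul_X,
    coeff_stirling2Series, coeff_one]
  · simp [S2_self]
  · rw [show r + (k + 1) = r + k + 1 by omega, S2_succ _ (by omega),
      S2_eq_zero_of_lt_r (by omega : r - 1 < r)]
    simp

lemma stirling2Series_succ_mul_one_sub (hn : r ≤ n) :
    stirling2Series R m r (n + 1) * (1 - C (((n + 1 : ℕ) : R) ^ m) * X) =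
      stirling2Series R m r n := by
  rw [mul_sub, mul_one, mul_left_comm]
  ext (_ | k) <;> simp only [map_sub, coeff_C_mul, coeff_zero_mul_X, coeff_succ_mul_X,
    coeff_stirling2Series]
  · simp [S2_succ _ hn, S2_eq_zero_of_lt (Nat.lt_succ_self n)]
  · rw [show n + 1 + (k + 1) = n + 1 + k + 1 by omega, S2_succ _ (by omega),
      Nat.add_sub_cancel, show n + 1 + k = n + (k + 1) by omega]
    push_cast
    ring

lemma stirling2Series_mul_prod (hr : 1 ≤ r) (hn : r ≤ n) :
    stirling2Series R m r n * ∏ j ∈ Icc r n, (1 - C ((j : R) ^ m) * X) = 1 := by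
  induction n, hn using Nat.le_induction with
  | base => rw [Icc_self, prod_singleton, stirling2Series_self_mul_one_sub hr]
  | succ n hn ih =>
    rw [prod_Icc_succ_top (by omega), mul_left_comm,
      stirling2Series_succ_mul_one_sub hn, mul_comm, ih]

lemma stirling2Series_eq_mul_expand (hr : 1 ≤ r) (hn : r ≤ n) :
    stirling2Series R m r n =
      stirling1Series R m r n * expand 2 two_ne_zero (stirling2Series R (2 * m) r n) := by
  refine left_inv_eq_right_inv (stirling2Series_mul_prod hr hn) ?_
  have hprod : (∏ j ∈ Icc r n, (1 - C ((j : R) ^ m) * X)) * stirling1Series R m r n =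
      expand 2 two_ne_zero (∏ j ∈ Icc r n, (1 - C ((j : R) ^ (2 * m)) * X)) := by
    rw [stirling1Series_eq_prod hr hn, ← prod_mul_distrib, map_prod]
    refine prod_congr rfl fun j _ => ?_
    rw [map_sub, map_one, map_mul, expand_C, expand_X, pow_mul']
    simp only [map_pow]
    ring
  rw [← mul_assoc, hprod, ← map_mul, mul_comm, stirling2Series_mul_prod hr hn, map_one]

lemma stirling2Series_one_eq_prod_expand (hr : 1 ≤ r) (hn : r ≤ n) (l : ℕ) :
    stirling2Series R 1 r n =
      (∏ s ∈ range l, expand (2 ^ s) (pow_ne_zero s two_ne_zero) (stirling1Series R (2 ^ s) r n)) *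
        expand (2 ^ l) (pow_ne_zero l two_ne_zero) (stirling2Series R (2 ^ l) r n) := by
  induction l with
  | zero => simp
  | succ l ih =>
    have hexpand : ∀ φ : R⟦X⟧, expand (2 ^ (l + 1)) (pow_ne_zero _ two_ne_zero) φ =
        expand (2 ^ l) (pow_ne_zero _ two_ne_zero) (expand 2 two_ne_zero φ) :=
      expand_mul _ _ _ _
    rw [ih, prod_range_succ, mul_assoc, hexpand, ← map_mul, pow_succ',
      ← stirling2Series_eq_mul_expand hr hn]

end CommRing

lemma PowerSeries.coeff_prod_expand {R ι : Type*} [CommRing R] [Fintype ι] [DecidableEq ι]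
    (w : ι → ℕ) (hw : ∀ i, w i ≠ 0) (φ : ι → R⟦X⟧) (k : ℕ) :
    coeff k (∏ i, expand (w i) (hw i) (φ i)) =
      ∑ f ∈ univ.filter (fun f : ι → Fin (k + 1) => ∑ i, w i * f i = k),
        ∏ i, coeff (f i) (φ i) := by
  rw [coeff_prod]
  symm
  refine sum_bij_ne_zero (fun f _ _ => Finsupp.equivFunOnFinite.symm fun i => w i * f i)
    ?_ ?_ ?_ ?_
  · intro f hf _
    simpa [mem_finsuppAntidiag] using hf
  · intro f₁ _ _ f₂ _ _ heq
    funext i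
    exact Fin.ext (Nat.eq_of_mul_eq_mul_left (Nat.pos_of_ne_zero (hw i))
      (by simpa using DFunLike.congr_fun heq i))
  · intro d hd hne
    obtain ⟨hsum, -⟩ := mem_finsuppAntidiag.mp hd
    have hdvd : ∀ i, w i * (d i / w i) = d i := fun i => Nat.mul_div_cancel' <| by
      by_contra h
      exact hne (prod_eq_zero (mem_univ i) (coeff_expand_of_not_dvd _ _ _ h))
    have hle : ∀ i, d i / w i < k + 1 := fun i => by
      have := hsum ▸ single_le_sum (fun j _ => Nat.zero_le (d j)) (mem_univ i)
      have := Nat.div_le_self (d i) (w i)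
      omega
    refine ⟨fun i => ⟨d i / w i, hle i⟩, ?_, ?_, ?_⟩
    · simpa [hdvd] using hsum
    · convert hne using 2 with i
      conv_rhs => rw [← hdvd i, coeff_expand_mul]
    · ext i
      simp [hdvd]
  · intro f _ _
    simp

theorem stmt13_general (l r n k : ℕ) (hr : 1 ≤ r) (hn : r ≤ n) :
    ∑ f ∈ Finset.univ.filter
        (fun f : Fin (l + 1) → Fin (k + 1) => ∑ s : Fin (l + 1), 2 ^ (s : ℕ) * (f s : ℕ) = k),
      S2 (2 ^ l) r (n + (f (Fin.last l) : ℕ)) n *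
        ∏ s : Fin l, S1 (2 ^ (s : ℕ)) r (n + 1) (n + 1 - (f s.castSucc : ℕ)) =
      S2 1 r (n + k) n := by
  let φ : Fin (l + 1) → ℤ⟦X⟧ :=
    Fin.lastCases (stirling2Series ℤ (2 ^ l) r n) fun s => stirling1Series ℤ (2 ^ (s : ℕ)) r n
  have hprod : ∏ s : Fin (l + 1), expand (2 ^ (s : ℕ)) (pow_ne_zero _ two_ne_zero) (φ s) =
      stirling2Series ℤ 1 r n := by
    rw [stirling2Series_one_eq_prod_expand hr hn l, Fin.prod_univ_castSucc,
      ← Fin.prod_univ_eq_prod_range]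
    simp [φ]
  have hcoeff := congrArg (coeff k) hprod
  rw [coeff_prod_expand, coeff_stirling2Series] at hcoeff
  apply Nat.cast_injective (R := ℤ)
  push_cast
  rw [← hcoeff]
  refine sum_congr rfl fun f _ => ?_
  rw [Fin.prod_univ_castSucc, mul_comm]
  simp [φ]

theorem stmt13 (l r n k : ℕ) (hr : 1 ≤ r) (hn : r ≤ n) (hl : 1 ≤ l) :
    ∑ f ∈ Finset.univ.filter
        (fun f : Fin (l + 1) → Fin (k + 1) => ∑ s : Fin (l + 1), 2 ^ (s : ℕ) * (f s : ℕ) = k),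
      S2 (2 ^ l) r (n + (f (Fin.last l) : ℕ)) n *
        ∏ s : Fin l, S1 (2 ^ (s : ℕ)) r (n + 1) (n + 1 - (f s.castSucc : ℕ)) =
      S2 1 r (n + k) n :=
  stmt13_general l r n k hr hn
end

section
/- For integers k ≥ 1 and l ≥ 1, the limit lim_{n→∞} S1(n+1, k+1)/(n!)^l exists and equals the multiple zeta value ζ(l, l, …, l) (l repeated k times) = ∑_{0 < j_1 < j_2 < ⋯ < j_k} 1/(j_1 j_2 ⋯ j_k)^l, provided l ≥ 2 (so the series converges). -/
open Finset

lemma S1_one (l k : ℕ) : S1 l 1 1 k = if k = 1 then 1 else 0 := by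
  rw [S1]; simp

lemma S1_rec (l n k : ℕ) (h : 2 ≤ n) :
    S1 l 1 n k = S1 l 1 (n - 1) (k - 1) + (n - 1) ^ l * S1 l 1 (n - 1) k := by
  rw [S1]
  rw [dif_neg (by omega), dif_neg (by omega)]

lemma S1_zero (l : ℕ) : ∀ n, S1 l 1 n 0 = 0 := by
  intro n
  induction n using Nat.strong_induction_on with
  | _ n ih =>
    match n with
    | 0 => rw [S1]; simp
    | 1 => rw [S1_one]; simp
    | (m + 2) =>
      rw [S1_rec l (m+2) 0 (by omega)]
      simp only [show m + 2 - 1 = m + 1 from rfl, Nat.zero_sub]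
      rw [ih (m+1) (by omega)]
      simp

/-- The key combinatorial identity. -/
lemma S1_eq_sum (l : ℕ) : ∀ n k : ℕ, S1 l 1 (n + 1) (k + 1) =
    ∑ A ∈ powersetCard k (Icc 1 n), ∏ j ∈ (Icc 1 n) \ A, j ^ l := by
  intro n
  induction n with
  | zero =>
    intro k
    rw [S1_one]
    match k with
    | 0 => simp
    | (k' + 1) => simp
  | succ n ih =>
    intro k
    have hins : Icc 1 (n + 1) = insert (n + 1) (Icc 1 n) := by
      ext j; simp [Finset.mem_Icc, Finset.mem_insert]; omega
    have hnotmem : (n + 1) ∉ Icc 1 n := by simp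
    have hrec : S1 l 1 (n + 2) (k + 1)
        = S1 l 1 (n + 1) k + (n + 1) ^ l * S1 l 1 (n + 1) (k + 1) := by
      rw [S1_rec l (n+2) (k+1) (by omega)]
      simp
    match k with
    | 0 =>
      rw [hrec, S1_zero, ih 0, hins]
      simp [Finset.prod_insert hnotmem]
    | (k' + 1) =>
      rw [hrec, ih k', ih (k' + 1), hins,
        Finset.powersetCard_succ_insert hnotmem k']
      have hdisj : Disjoint (powersetCard (k' + 1) (Icc 1 n))
          ((powersetCard k' (Icc 1 n)).image (insert (n + 1))) := by
        rw [Finset.disjoint_left]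
        intro A hA hA'
        have h1 : A ⊆ Icc 1 n := (Finset.mem_powersetCard.mp hA).1
        rcases Finset.mem_image.mp hA' with ⟨B, _, rfl⟩
        exact hnotmem (h1 (Finset.mem_insert_self _ _))
      rw [Finset.sum_union hdisj]
      have h1 : ∑ A ∈ powersetCard (k' + 1) (Icc 1 n),
          ∏ j ∈ insert (n + 1) (Icc 1 n) \ A, j ^ l
          = (n + 1) ^ l * ∑ A ∈ powersetCard (k' + 1) (Icc 1 n),
            ∏ j ∈ (Icc 1 n) \ A, j ^ l := by
        rw [Finset.mul_sum]
        refine Finset.sum_congr rfl fun A hA => ?_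
        have hAn : (n + 1) ∉ A := fun h =>
          hnotmem ((Finset.mem_powersetCard.mp hA).1 h)
        rw [Finset.insert_sdiff_of_notMem _ hAn,
          Finset.prod_insert (by simp [Finset.mem_sdiff] at *)]
      have h2 : ∑ A ∈ (powersetCard k' (Icc 1 n)).image (insert (n + 1)),
          ∏ j ∈ insert (n + 1) (Icc 1 n) \ A, j ^ l
          = ∑ A ∈ powersetCard k' (Icc 1 n), ∏ j ∈ (Icc 1 n) \ A, j ^ l := by
        rw [Finset.sum_image ?inj]
        case inj =>
          intro A hA B hB hAB
          have hAn : (n + 1) ∉ A := fun h =>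
            hnotmem ((Finset.mem_powersetCard.mp hA).1 h)
          have hBn : (n + 1) ∉ B := fun h =>
            hnotmem ((Finset.mem_powersetCard.mp hB).1 h)
          have := congrArg (fun s => Finset.erase s (n+1)) hAB
          simpa [Finset.erase_insert hAn, Finset.erase_insert hBn] using this
        refine Finset.sum_congr rfl fun A hA => ?_
        have hAn : (n + 1) ∉ A := fun h =>
          hnotmem ((Finset.mem_powersetCard.mp hA).1 h)
        congr 1
        ext x
        simp only [Finset.mem_sdiff, Finset.mem_insert, Finset.mem_Icc, not_or]
        constructor
        · rintro ⟨h | h, hne, hnA⟩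
          · exact absurd h hne
          · exact ⟨h, hnA⟩
        · rintro ⟨⟨hx1, hx2⟩, hnA⟩
          exact ⟨Or.inr ⟨hx1, hx2⟩, by omega, hnA⟩
      rw [h1, h2]; ring

lemma prod_Icc_eq_factorial (n : ℕ) : ∏ j ∈ Icc 1 n, (j : ℝ) = (n.factorial : ℝ) := by
  rw [← Nat.cast_prod]
  congr 1
  rw [← Finset.Ico_add_one_right_eq_Icc]
  exact Finset.prod_Ico_id_eq_factorial n

/-- The ratio identity over ℝ. -/
lemma S1_div_eq (l k n : ℕ) :
    (S1 l 1 (n + 1) (k + 1) : ℝ) / (n.factorial : ℝ) ^ l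
      = ∑ A ∈ powersetCard k (Icc 1 n), ∏ j ∈ A, 1 / (j : ℝ) ^ l := by
  have hfac : ((n.factorial : ℝ)) ^ l ≠ 0 := by positivity
  rw [div_eq_iff hfac, S1_eq_sum]
  push_cast
  rw [Finset.sum_mul]
  refine Finset.sum_congr rfl fun A hA => ?_
  have hsub : A ⊆ Icc 1 n := (Finset.mem_powersetCard.mp hA).1
  have hfull : (∏ j ∈ (Icc 1 n) \ A, (j : ℝ) ^ l) * ∏ j ∈ A, (j : ℝ) ^ l
      = (n.factorial : ℝ) ^ l := by
    rw [Finset.prod_sdiff hsub, Finset.prod_pow, prod_Icc_eq_factorial]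
  have hAne : ∀ j ∈ A, ((j : ℝ)) ^ l ≠ 0 := by
    intro j hj
    have : 1 ≤ j := (Finset.mem_Icc.mp (hsub hj)).1
    positivity
  have hone : (∏ j ∈ A, (1 / (j : ℝ) ^ l * (j : ℝ) ^ l)) = 1 :=
    Finset.prod_eq_one fun j hj => by rw [one_div, inv_mul_cancel₀ (hAne j hj)]
  calc ∏ x ∈ Icc 1 n \ A, (x : ℝ) ^ l
      = 1 * ∏ x ∈ Icc 1 n \ A, (x : ℝ) ^ l := (one_mul _).symm
    _ = (∏ j ∈ A, 1 / (j : ℝ) ^ l) * ((∏ x ∈ Icc 1 n \ A, (x : ℝ) ^ l) * ∏ j ∈ A, (j : ℝ) ^ l) := by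
        conv_lhs => rw [← hone]
        rw [Finset.prod_mul_distrib]; ring
    _ = (∏ j ∈ A, 1 / (j : ℝ) ^ l) * (n.factorial : ℝ) ^ l := by rw [hfull]

/-- Packaging a `k`-subset of `[1, ∞)` as a strictly monotone tuple. -/
def tupOf (k : ℕ) (A : Finset ℕ) (hc : A.card = k) (h1 : ∀ j ∈ A, 1 ≤ j) :
    {f : Fin k → ℕ // StrictMono f ∧ ∀ i, 1 ≤ f i} :=
  ⟨A.orderEmbOfFin hc, (A.orderEmbOfFin hc).strictMono,
    fun i => h1 _ (A.orderEmbOfFin_mem hc i)⟩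

open Filter in
theorem stmt16 (l k : ℕ) (hk : 1 ≤ k) (hl : 2 ≤ l) :
    Tendsto (fun n : ℕ => (S1 l 1 (n + 1) (k + 1) : ℝ) / (n.factorial : ℝ) ^ l)
      atTop
      (nhds (∑' j : {f : Fin k → ℕ // StrictMono f ∧ ∀ i, 1 ≤ f i},
        ∏ i, 1 / ((j.1 i : ℝ)) ^ l)) := by
  set T := {f : Fin k → ℕ // StrictMono f ∧ ∀ i, 1 ≤ f i} with hT
  set a : T → ℝ := fun f => ∏ i, 1 / ((f.1 i : ℝ)) ^ l with ha
  have hanonneg : ∀ f, 0 ≤ a f := by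
    intro f; apply Finset.prod_nonneg; intro i _; positivity
  -- summability
  have hsummN : Summable (fun j : ℕ => 1 / (j : ℝ) ^ l) :=
    Real.summable_one_div_nat_pow.mpr (by omega)
  have hCnn : 0 ≤ ∑' j : ℕ, 1 / (j : ℝ) ^ l :=
    tsum_nonneg fun j => by positivity
  have hsum : Summable a := by
    apply summable_of_sum_le (c := (∑' j : ℕ, 1 / (j : ℝ) ^ l) ^ k) hanonneg
    intro u
    set N := u.sup (fun f => Finset.univ.sup f.1) with hN
    have hsub : u.image Subtype.val ⊆ Fintype.piFinset (fun _ : Fin k => Icc 1 N) := by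
      intro g hg
      rcases Finset.mem_image.mp hg with ⟨f, hf, rfl⟩
      rw [Fintype.mem_piFinset]
      intro i
      rw [Finset.mem_Icc]
      exact ⟨f.2.2 i, le_trans (Finset.le_sup (Finset.mem_univ i))
        (Finset.le_sup (f := fun f : T => Finset.univ.sup f.1) hf)⟩
    calc ∑ f ∈ u, a f = ∑ g ∈ u.image Subtype.val, ∏ i, 1 / ((g i : ℝ)) ^ l := by
          rw [Finset.sum_image (fun f _ g _ h => Subtype.ext h)]
      _ ≤ ∑ g ∈ Fintype.piFinset (fun _ : Fin k => Icc 1 N), ∏ i, 1 / ((g i : ℝ)) ^ l := by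
          apply Finset.sum_le_sum_of_subset_of_nonneg hsub
          intro g _ _
          apply Finset.prod_nonneg; intro i _; positivity
      _ = ∏ _i : Fin k, ∑ j ∈ Icc 1 N, 1 / (j : ℝ) ^ l := by
          rw [Finset.prod_univ_sum]
      _ ≤ ∏ _i : Fin k, ∑' j : ℕ, 1 / (j : ℝ) ^ l := by
          apply Finset.prod_le_prod
          · intro i _; apply Finset.sum_nonneg; intro j _; positivity
          · intro i _
            exact Summable.sum_le_tsum _ (fun j _ => by positivity) hsummN
      _ = (∑' j : ℕ, 1 / (j : ℝ) ^ l) ^ k := by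
          rw [Finset.prod_const, Finset.card_univ, Fintype.card_fin]
  have hHasSum : HasSum a (∑' f : T, a f) := hsum.hasSum
  -- the finsets
  set F : ℕ → Finset T := fun n =>
    (powersetCard k (Icc 1 n)).attach.image (fun A =>
      tupOf k A.1 (Finset.mem_powersetCard.mp A.2).2
        (fun j hj => (Finset.mem_Icc.mp ((Finset.mem_powersetCard.mp A.2).1 hj)).1)) with hF
  have htupmem : ∀ n (A : Finset ℕ) (hc : A.card = k) (h1 : ∀ j ∈ A, 1 ≤ j),
      A ∈ powersetCard k (Icc 1 n) → tupOf k A hc h1 ∈ F n := by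
    intro n A hc h1 hA
    exact Finset.mem_image.mpr ⟨⟨A, hA⟩, Finset.mem_attach _ _, rfl⟩
  have htup_inj : ∀ (A B : Finset ℕ) hcA h1A hcB h1B,
      tupOf k A hcA h1A = tupOf k B hcB h1B → A = B := by
    intro A B hcA h1A hcB h1B h
    have : Set.range (A.orderEmbOfFin hcA) = Set.range (B.orderEmbOfFin hcB) := by
      have := congrArg Subtype.val h
      simp only [tupOf] at this
      rw [show ((A.orderEmbOfFin hcA : Fin k → ℕ)) = (B.orderEmbOfFin hcB : Fin k → ℕ) from this]
    rw [Finset.range_orderEmbOfFin, Finset.range_orderEmbOfFin] at this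
    exact_mod_cast Finset.coe_injective this
  -- monotone
  have hmono : Monotone F := by
    intro n m hnm x hx
    rcases Finset.mem_image.mp hx with ⟨A, _, rfl⟩
    have hAm : A.1 ∈ powersetCard k (Icc 1 m) :=
      Finset.powersetCard_mono (Finset.Icc_subset_Icc le_rfl hnm) A.2
    exact htupmem m A.1 _ _ hAm
  -- exhaustion
  have hexh : ∀ x : T, ∃ n, x ∈ F n := by
    intro x
    set N := Finset.univ.sup x.1 with hNdef
    refine ⟨N, ?_⟩
    set A := Finset.univ.image x.1 with hA
    have hcard : A.card = k := by
      rw [hA, Finset.card_image_of_injective _ x.2.1.injective,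
        Finset.card_univ, Fintype.card_fin]
    have h1 : ∀ j ∈ A, 1 ≤ j := by
      intro j hj
      rcases Finset.mem_image.mp hj with ⟨i, _, rfl⟩
      exact x.2.2 i
    have hAmem : A ∈ powersetCard k (Icc 1 N) := by
      rw [Finset.mem_powersetCard]
      refine ⟨?_, hcard⟩
      intro j hj
      rcases Finset.mem_image.mp hj with ⟨i, _, rfl⟩
      exact Finset.mem_Icc.mpr ⟨x.2.2 i, Finset.le_sup (Finset.mem_univ i)⟩
    have heq : tupOf k A hcard h1 = x := by
      apply Subtype.ext
      have hfs : ∀ i, x.1 i ∈ A := fun i =>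
        Finset.mem_image.mpr ⟨i, Finset.mem_univ i, rfl⟩
      exact (Finset.orderEmbOfFin_unique hcard hfs x.2.1).symm
    exact heq ▸ htupmem N A hcard h1 hAmem
  have hFtop : Tendsto F atTop atTop :=
    tendsto_atTop_finset_of_monotone hmono hexh
  have hcomp : Tendsto (fun n => ∑ f ∈ F n, a f) atTop (nhds (∑' f : T, a f)) :=
    hHasSum.comp hFtop
  refine hcomp.congr fun n => ?_
  rw [S1_div_eq]
  rw [hF]
  rw [Finset.sum_image ?hinj]
  case hinj =>
    intro A _ B _ h
    exact Subtype.ext (htup_inj A.1 B.1 _ _ _ _ h)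
  rw [← Finset.sum_attach (powersetCard k (Icc 1 n))
    (fun A => ∏ j ∈ A, 1 / (j : ℝ) ^ l)]
  refine Finset.sum_congr rfl fun A _ => ?_
  -- ∏ over A.1 = ∏ over Fin k via orderEmbOfFin
  have hc := (Finset.mem_powersetCard.mp A.2).2
  have himg : Finset.univ.image (A.1.orderEmbOfFin hc) = A.1 := by
    apply Finset.eq_of_subset_of_card_le
    · intro j hj
      rcases Finset.mem_image.mp hj with ⟨i, _, rfl⟩
      exact A.1.orderEmbOfFin_mem hc i
    · rw [hc]
      refine Finset.le_card_iff_exists_subset_card.mpr ?_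
      refine ⟨Finset.univ.image (A.1.orderEmbOfFin hc), le_rfl, ?_⟩
      rw [Finset.card_image_of_injective _ (A.1.orderEmbOfFin hc).injective,
        Finset.card_univ, Fintype.card_fin]
  show (∏ i : Fin k, 1 / ((A.1.orderEmbOfFin hc) i : ℝ) ^ l) = ∏ j ∈ A.1, 1 / (j : ℝ) ^ l
  have hpi := Finset.prod_image (f := fun j : ℕ => 1 / (j : ℝ) ^ l)
    (g := ⇑(A.1.orderEmbOfFin hc)) (s := Finset.univ)
    (fun i _ j _ h => (A.1.orderEmbOfFin hc).injective h)
  rw [himg] at hpi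
  exact hpi.symm
end
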